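/- arXiv:1810.02732 — 2 statements merged into one kernel-verified Lean document; each statement's English description precedes it below -/
import Mathlib

section
/- For all integers n ≥ 1 and r ≥ 0, D^{n}(a·x^{r}) = a·x^{r}·y^{n}·w^{n} · (r + x·w^{−1}) · ∑_{k=0}^{n−1} Q_{n,k}(r + x·w^{−1}) · y^{k}, as an identity in the field K, where Q_{n,k}(r + x·w^{−1}) denotes the evaluation of the polynomial Q_{n,k} at the element r + x·w^{−1} ∈ K. -/
open Polynomial

/-- The Ramanujan–Shor polynomials `Q n k ∈ ℚ[x]`. -/
noncomputable def ramanujanShorQ : ℕ → ℤ → Polynomial ℚ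
  | 0, _ => 0
  | 1, k => if k = 0 then 1 else 0
  | (n + 2), k =>
      if 0 ≤ k ∧ k ≤ (n : ℤ) + 1 then
        (Polynomial.X + Polynomial.C ((n : ℚ) + 1)) * ramanujanShorQ (n + 1) k
          + Polynomial.C (((n : ℤ) + k : ℤ) : ℚ) * ramanujanShorQ (n + 1) (k - 1)
      else 0

/-- The images of the four variables `a, x, y, w` in the fraction field of `ℚ[a,x,y,w]`. -/
noncomputable def gv (i : Fin 4) : FractionRing (MvPolynomial (Fin 4) ℚ) :=
  algebraMap (MvPolynomial (Fin 4) ℚ) (FractionRing (MvPolynomial (Fin 4) ℚ)) (MvPolynomial.X i)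

/-!
The element `t = r + x w⁻¹` is a constant of `D`, because `D (x w⁻¹) = 0`. The monomials
`M n k = a x^r y^(n+k) w^n` satisfy `D (M n k) = (t + n) M (n+1) k + (n + k) M (n+1) (k+1)`, which is
Shor's recurrence in transposed form. Since `D (a x^r) = t M 1 0`, induction on `n` gives
`D^[n] (a x^r) = t ∑ₖ Q_{n,k}(t) M n k`, and `M n k = a x^r y^n w^n y^k`.
-/

section RamanujanShor

lemma ramanujanShorQ_of_neg (n : ℕ) {k : ℤ} (hk : k < 0) : ramanujanShorQ n k = 0 := by
  match n with
  | 0 => rfl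
  | 1 => rw [ramanujanShorQ, if_neg (by omega)]
  | m + 2 => rw [ramanujanShorQ, if_neg (by omega)]

lemma ramanujanShorQ_of_le {n : ℕ} {k : ℤ} (hk : (n : ℤ) ≤ k) : ramanujanShorQ n k = 0 := by
  match n with
  | 0 => rfl
  | 1 => rw [ramanujanShorQ, if_neg (by omega)]
  | m + 2 => rw [ramanujanShorQ, if_neg (by push_cast at hk; omega)]

lemma ramanujanShorQ_one_zero : ramanujanShorQ 1 0 = 1 := rfl

lemma ramanujanShorQ_add_two {m : ℕ} {k : ℤ} (h0 : 0 ≤ k) (h1 : k ≤ (m : ℤ) + 1) :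
    ramanujanShorQ (m + 2) k = (X + C ((m : ℚ) + 1)) * ramanujanShorQ (m + 1) k
      + C (((m : ℤ) + k : ℤ) : ℚ) * ramanujanShorQ (m + 1) (k - 1) := by
  rw [ramanujanShorQ, if_pos ⟨h0, h1⟩]

lemma sum_ramanujanShorQ_add_two {A : Type*} [CommRing A] [Algebra ℚ A] (t : A) (f : ℕ → A)
    (m : ℕ) :
    ∑ k ∈ Finset.range (m + 2), aeval t (ramanujanShorQ (m + 2) k) * f k
      = ∑ k ∈ Finset.range (m + 1), aeval t (ramanujanShorQ (m + 1) k)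
          * ((t + (m + 1)) * f k + ((m + 1) + k) * f (k + 1)) := by
  set c : ℤ → A := fun k => aeval t (ramanujanShorQ (m + 1) k)
  have hrec : ∀ k ∈ Finset.range (m + 2), aeval t (ramanujanShorQ (m + 2) k) * f k
      = (t + (m + 1)) * c k * f k + (m + k) * c (k - 1) * f k := by
    intro k hk
    rw [Finset.mem_range] at hk
    rw [ramanujanShorQ_add_two (by omega) (by omega)]
    simp only [c, map_add, map_mul, aeval_X, aeval_C]
    push_cast
    ring
  have hdrop : ∑ k ∈ Finset.range (m + 2), (t + (m + 1)) * c k * f k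
      = ∑ k ∈ Finset.range (m + 1), (t + (m + 1)) * c k * f k := by
    have hlast : c (m + 1 : ℕ) = 0 := by simp only [c, ramanujanShorQ_of_le le_rfl, map_zero]
    rw [Finset.sum_range_succ, hlast, mul_zero, zero_mul, add_zero]
  have hshift : ∑ k ∈ Finset.range (m + 2), (m + k) * c (k - 1) * f k
      = ∑ k ∈ Finset.range (m + 1), (m + 1 + k) * c k * f (k + 1) := by
    have hfirst : c ((0 : ℕ) - 1) = 0 := by
      simp only [c, ramanujanShorQ_of_neg _ (by omega : ((0 : ℕ) : ℤ) - 1 < 0), map_zero]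
    rw [Finset.sum_range_succ', hfirst, mul_zero, zero_mul, add_zero]
    push_cast
    simp only [add_sub_cancel_right, add_assoc, add_comm (1 : A)]
  rw [Finset.sum_congr rfl hrec, Finset.sum_add_distrib, hdrop, hshift, ← Finset.sum_add_distrib]
  refine Finset.sum_congr rfl fun k _ => ?_
  ring

end RamanujanShor

section Derivation

variable {R A M : Type*} [CommSemiring R] [CommSemiring A] [AddCommMonoid M] [Algebra R A]
  [Module A M] [Module R M] (D : Derivation R A M)

lemma Derivation.map_pow_of_map_eq_smul {u : A} {m : M} (h : D u = u • m) (n : ℕ) :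
    D (u ^ n) = (n * u ^ n) • m := by
  rw [D.leibniz_pow, h]
  rcases n with _ | n
  · simp
  · rw [smul_smul, ← Nat.cast_smul_eq_nsmul A, smul_smul, ← pow_succ, Nat.add_sub_cancel]

lemma Derivation.map_mul_of_map_eq_zero {c : A} (hc : D c = 0) (b : A) :
    D (c * b) = c • D b := by
  rw [D.leibniz, hc, smul_zero, add_zero]

end Derivation

section GrammarH

/- The fraction field of `ℚ[a,x,y,w]` carries a `ℚ`-module structure (from `OreLocalization`) that
is not definitionally `Algebra.toModule`, and the derivation of `dn_axr` is linear for that one. -/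
set_option linter.overlappingInstances false

variable {K : Type*} [Field K] [Algebra ℚ K] [Module ℚ K] (D : Derivation ℚ K K) {a x y w : K}

lemma map_natCast_add_mul_inv_eq_zero (hDx : D x = x * y * w) (hDw : D w = y * w ^ 2)
    (hw : w ≠ 0) (r : ℕ) : D (r + x * w⁻¹) = 0 := by
  simp only [map_add, D.map_natCast, D.leibniz, D.leibniz_inv, hDx, hDw, smul_eq_mul]
  field_simp
  ring

lemma map_grammarH_monomial (hDa : D a = a * x * y) (hDx : D x = x * y * w)
    (hDy : D y = y ^ 3 * w) (hDw : D w = y * w ^ 2) (hw : w ≠ 0) (r n k : ℕ) :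
    D (a * x ^ r * y ^ (n + k) * w ^ n)
      = (r + x * w⁻¹ + n) * (a * x ^ r * y ^ (n + 1 + k) * w ^ (n + 1))
        + (n + k) * (a * x ^ r * y ^ (n + 1 + (k + 1)) * w ^ (n + 1)) := by
  have hx := D.map_pow_of_map_eq_smul (m := y * w) (by rw [hDx, smul_eq_mul]; ring) r
  have hy := D.map_pow_of_map_eq_smul (m := y ^ 2 * w) (by rw [hDy, smul_eq_mul]; ring) (n + k)
  have hw' := D.map_pow_of_map_eq_smul (m := w * y) (by rw [hDw, smul_eq_mul]; ring) n
  simp only [D.leibniz, hDa, hx, hy, hw', smul_eq_mul]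
  field_simp
  push_cast
  ring

theorem iterate_grammarH (hDa : D a = a * x * y) (hDx : D x = x * y * w)
    (hDy : D y = y ^ 3 * w) (hDw : D w = y * w ^ 2) (hw : w ≠ 0) (r n : ℕ) :
    D^[n + 1] (a * x ^ r)
      = (r + x * w⁻¹) * ∑ k ∈ Finset.range (n + 1),
          aeval ((r : K) + x * w⁻¹) (ramanujanShorQ (n + 1) k)
            * (a * x ^ r * y ^ (n + 1 + k) * w ^ (n + 1)) := by
  set t : K := r + x * w⁻¹
  have hDt : D t = 0 := map_natCast_add_mul_inv_eq_zero D hDx hDw hw r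
  have hDQ (p : ℚ[X]) : D (aeval t p) = 0 := by rw [D.map_aeval, hDt, smul_zero]
  have hM := map_grammarH_monomial D hDa hDx hDy hDw hw r
  induction n with
  | zero =>
    simpa [ramanujanShorQ_one_zero] using hM 0 0
  | succ n ih =>
    rw [Function.iterate_succ_apply', ih, D.map_mul_of_map_eq_zero hDt, smul_eq_mul, map_sum,
      sum_ramanujanShorQ_add_two]
    congr 1
    refine Finset.sum_congr rfl fun k _ => ?_
    rw [D.map_mul_of_map_eq_zero (hDQ _), hM, smul_eq_mul]
    push_cast
    ring

end GrammarH

lemma gv_ne_zero (i : Fin 4) : gv i ≠ 0 :=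
  (map_ne_zero_iff _ (IsFractionRing.injective _ _)).mpr (MvPolynomial.X_ne_zero i)

theorem dn_axr (D : Derivation ℚ (FractionRing (MvPolynomial (Fin 4) ℚ))
      (FractionRing (MvPolynomial (Fin 4) ℚ)))
    (hDa : D (gv 0) = gv 0 * gv 1 * gv 2)
    (hDx : D (gv 1) = gv 1 * gv 2 * gv 3)
    (hDy : D (gv 2) = (gv 2) ^ 3 * gv 3)
    (hDw : D (gv 3) = gv 2 * (gv 3) ^ 2)
    (n r : ℕ) (hn : 1 ≤ n) :
    (⇑D)^[n] (gv 0 * (gv 1) ^ r)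
      = gv 0 * (gv 1) ^ r * (gv 2) ^ n * (gv 3) ^ n * ((r : _) + gv 1 * (gv 3)⁻¹)
        * ∑ k ∈ Finset.range n,
            Polynomial.aeval ((r : _) + gv 1 * (gv 3)⁻¹) (ramanujanShorQ n (k : ℤ))
              * (gv 2) ^ k := by
  obtain ⟨n, rfl⟩ := Nat.exists_eq_add_of_le' hn
  refine (iterate_grammarH D hDa hDx hDy hDw (gv_ne_zero 3) r n).trans ?_
  rw [Finset.mul_sum, Finset.mul_sum]
  refine Finset.sum_congr rfl fun k _ => ?_
  ring
end

section
/- (Lacasse identity) For every integer n ≥ 1: n^{n+1} = ∑_{j=1}^{n} ∑_{k=0}^{n−j} C(n,j) · C(n−j,k) · j^{j} · k^{k} · (n−j−k)^{n−j−k}, as an identity of natural numbers, with the convention 0^{0} = 1. -/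
/-!
Writing the triple sum as `∑_j C(n,j) j^j A_{n-j}` with the Abel sum
`A_m(x, y) = ∑_k C(m,k) (x+k)^k (y+m-k)^(m-k)`, everything rests on Abel's identity
`A_m(x, y) = ∑_i m!/(m-i)! (x+y+m)^(m-i)`, proved together with
`∑_k C(m,k) x (x+k)^(k-1) (y+m-k)^(m-k) = (x+y+m)^m` by induction on `m`.
Expanding `A_{n-j}(0, 0)` this way and exchanging the roles of `j` and `i` in the resulting
multinomial sum produces the inner sums `A_{n-i}(0, i)`, which Abel's identity evaluates again.
What is left is `∑_c (c+1) n!/(n-c)! n^(n-c)`, and its part `∑_c c n!/(n-c)! n^(n-c)`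
telescopes to `n^(n+1)`; the rest is the missing `j = 0` term `A_n(0, 0)`.
-/

open Finset

section Antidiagonal

variable {M : Type*} [AddCommMonoid M]

theorem sum_antidiagonal_antidiagonal_assoc (n : ℕ) (f : ℕ → ℕ → ℕ → M) :
    ∑ p ∈ antidiagonal n, ∑ q ∈ antidiagonal p.2, f p.1 q.1 q.2
      = ∑ p ∈ antidiagonal n, ∑ q ∈ antidiagonal p.1, f q.1 q.2 p.2 := by
  rw [sum_sigma', sum_sigma']
  refine sum_nbij' (fun x => ⟨(x.1.1 + x.2.1, x.2.2), (x.1.1, x.2.1)⟩)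
    (fun x => ⟨(x.2.1, x.2.2 + x.1.2), (x.2.2, x.1.2)⟩) ?_ ?_ ?_ ?_ fun _ _ => rfl
  all_goals
    rintro ⟨⟨a, b⟩, ⟨c, d⟩⟩ h
    simp only [mem_sigma, HasAntidiagonal.mem_antidiagonal, and_true] at h ⊢
    obtain ⟨rfl, rfl⟩ := h
  · omega
  · omega
  · rfl
  · rfl

theorem choose_mul_choose_comm (j i l : ℕ) :
    (j + i + l).choose j * (i + l).choose i = (j + i + l).choose i * (j + l).choose j := by
  have h := Nat.choose_mul (n := j + i + l) (Nat.le_add_right i l)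
  rwa [show j + i + l - i = j + l by omega, Nat.add_sub_cancel_left,
    Nat.choose_symm_of_eq_add (by omega : j + i + l = i + l + j), ← Nat.choose_symm_add] at h

theorem sum_antidiagonal_antidiagonal_choose_comm (n : ℕ) (f : ℕ → ℕ → ℕ → M) :
    ∑ p ∈ antidiagonal n, ∑ q ∈ antidiagonal p.2,
        (n.choose p.1 * p.2.choose q.1) • f p.1 q.1 q.2
      = ∑ p ∈ antidiagonal n, ∑ q ∈ antidiagonal p.2,
          (n.choose p.1 * p.2.choose q.1) • f q.1 p.1 q.2 := by
  rw [sum_sigma', sum_sigma']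
  refine sum_nbij' (fun x => ⟨(x.2.1, x.1.1 + x.2.2), (x.1.1, x.2.2)⟩)
    (fun x => ⟨(x.2.1, x.1.1 + x.2.2), (x.1.1, x.2.2)⟩) ?_ ?_ ?_ ?_ ?_
  all_goals
    rintro ⟨⟨j, r⟩, ⟨i, l⟩⟩ h
    simp only [mem_sigma, HasAntidiagonal.mem_antidiagonal, and_true] at h ⊢
    obtain ⟨rfl, rfl⟩ := h
  · omega
  · omega
  · rfl
  · rfl
  · rw [← add_assoc, choose_mul_choose_comm]

theorem sum_antidiagonal_antidiagonal_add (n : ℕ) (g : ℕ → ℕ → M) :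
    ∑ p ∈ antidiagonal n, ∑ q ∈ antidiagonal p.2, g (p.1 + q.1) q.2
      = ∑ p ∈ antidiagonal n, (p.1 + 1) • g p.1 p.2 := by
  rw [sum_antidiagonal_antidiagonal_assoc n fun j i l => g (j + i) l]
  refine sum_congr rfl fun p _ => ?_
  rw [sum_congr rfl fun q hq => by rw [mem_antidiagonal.mp hq], sum_const, Nat.card_antidiagonal]

theorem sum_antidiagonal_eq_add_sum_Icc (n : ℕ) (f : ℕ → ℕ → M) :
    ∑ p ∈ antidiagonal n, f p.1 p.2 = f 0 n + ∑ j ∈ Icc 1 n, f j (n - j) := by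
  rw [Nat.sum_antidiagonal_eq_sum_range_succ f, sum_range_succ', add_comm,
    ← Ico_add_one_right_eq_Icc, sum_Ico_eq_sum_range, Nat.add_sub_cancel]
  simp only [add_comm 1]
  rfl

end Antidiagonal

section Abel

variable {R : Type*} [CommSemiring R]

/-- The Abel polynomial `x (x + k)^(k - 1)`. -/
def abelPoly (x : R) : ℕ → R
  | 0 => 1
  | k + 1 => x * (x + (k + 1)) ^ k

theorem abelPoly_mul_add (x : R) (k : ℕ) : abelPoly x k * (x + k) = x * (x + k) ^ k := by
  cases k with
  | zero => simp [abelPoly]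
  | succ k => simp only [abelPoly]; push_cast; ring

theorem pow_succ_eq_abelPoly_add (x : R) (k : ℕ) :
    (x + (k + 1)) ^ (k + 1) = abelPoly x (k + 1) + (k + 1) * (x + (k + 1)) ^ k := by
  simp only [abelPoly]; ring

def abelSum (m : ℕ) (x y : R) : R :=
  ∑ p ∈ antidiagonal m, m.choose p.1 * (x + p.1) ^ p.1 * (y + p.2) ^ p.2

def abelPolySum (m e : ℕ) (x y : R) : R :=
  ∑ p ∈ antidiagonal m, m.choose p.1 * abelPoly x p.1 * (y + p.2) ^ (p.2 + e)

/-- `m! ∑_{l ≤ m} z^l / l!`. -/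
def truncExp (m : ℕ) (z : R) : R :=
  ∑ p ∈ antidiagonal m, (m.descFactorial p.1 : R) * z ^ p.2

theorem add_add_mul_abelPolySum (m : ℕ) (x y : R) :
    (x + y + m) * abelPolySum m 0 x y = abelPolySum m 1 x y + x * abelSum m x y := by
  simp only [abelPolySum, abelSum, mul_sum, ← sum_add_distrib]
  refine sum_congr rfl fun p hp => ?_
  rw [← mem_antidiagonal.mp hp]
  push_cast
  calc _ = (p.1 + p.2 : ℕ).choose p.1 * (y + p.2) ^ p.2 * (abelPoly x p.1 * (x + p.1))
          + (p.1 + p.2 : ℕ).choose p.1 * abelPoly x p.1 * (y + p.2) ^ (p.2 + 1) := by ring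
    _ = _ := by rw [abelPoly_mul_add]; ring

theorem truncExp_succ (m : ℕ) (z : R) :
    truncExp (m + 1) z = z ^ (m + 1) + (m + 1) * truncExp m z := by
  simp only [truncExp, Nat.sum_antidiagonal_succ, Nat.descFactorial_zero,
    Nat.succ_descFactorial_succ, mul_sum]
  push_cast
  simp only [one_mul, mul_assoc]

theorem abelPolySum_succ (m : ℕ) (x y : R) :
    abelPolySum (m + 1) 0 x y = abelPolySum m 1 x (y + 1) + x * abelSum m (x + 1) y := by
  have shift : abelPolySum m 1 x (y + 1)
      = ∑ p ∈ antidiagonal (m + 1), m.choose p.1 * abelPoly x p.1 * (y + p.2) ^ p.2 := by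
    rw [Nat.sum_antidiagonal_succ', Nat.choose_succ_self]
    simp only [abelPolySum, Nat.cast_zero, zero_mul, zero_add]
    refine sum_congr rfl fun p _ => ?_
    push_cast
    ring
  have pascal_left :
      ∑ p ∈ antidiagonal m, (m.choose p.1 : R) * abelPoly x (p.1 + 1) * (y + p.2) ^ p.2
        = x * abelSum m (x + 1) y := by
    rw [abelSum, mul_sum]
    refine sum_congr rfl fun p _ => ?_
    simp only [abelPoly]
    ring
  rw [shift, abelPolySum, Nat.sum_antidiagonal_succ, Nat.sum_antidiagonal_succ, ← pascal_left]
  simp only [Nat.choose_succ_succ', Nat.choose_zero_right, Nat.cast_add, add_mul, sum_add_distrib,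
    add_zero]
  ring

theorem abelSum_succ (m : ℕ) (x y : R) :
    abelSum (m + 1) x y = abelPolySum (m + 1) 0 x y + (m + 1) * abelSum m (x + 1) y := by
  rw [abelSum, abelPolySum, Nat.sum_antidiagonal_succ, Nat.sum_antidiagonal_succ, abelSum, mul_sum,
    add_assoc, ← sum_add_distrib]
  congr 1
  · simp [abelPoly]
  refine sum_congr rfl fun p _ => ?_
  have h : ((m : R) + 1) * m.choose p.1 = (m + 1).choose (p.1 + 1) * (p.1 + 1) := by
    simpa using congrArg (Nat.cast : ℕ → R) (Nat.add_one_mul_choose_eq m p.1)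
  push_cast
  rw [pow_succ_eq_abelPoly_add]
  calc _ = ((m + 1).choose (p.1 + 1) : R) * abelPoly x (p.1 + 1) * (y + p.2) ^ p.2
        + (m + 1).choose (p.1 + 1) * (p.1 + 1) * ((x + (p.1 + 1)) ^ p.1 * (y + p.2) ^ p.2) := by
          ring
    _ = _ := by rw [← h]; ring

theorem abelPolySum_eq_pow_and_abelSum_eq_truncExp (m : ℕ) (x y : R) :
    abelPolySum m 0 x y = (x + y + m) ^ m ∧ abelSum m x y = truncExp m (x + y + m) := by
  induction m generalizing x y with
  | zero => simp [abelPolySum, abelSum, truncExp, abelPoly]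
  | succ m ih =>
    have shift_eq : x + 1 + y + m = x + y + (m + 1 : ℕ) := by push_cast; ring
    have shift : abelSum m (x + 1) y = abelSum m x (y + 1) := by
      rw [(ih _ _).2, (ih _ _).2, ← add_assoc, add_right_comm x]
    have abel : abelPolySum (m + 1) 0 x y = (x + y + (m + 1 : ℕ)) ^ (m + 1) := by
      rw [abelPolySum_succ, shift, ← add_add_mul_abelPolySum, (ih x (y + 1)).1, ← pow_succ',
        ← add_assoc, add_right_comm x, shift_eq]
    refine ⟨abel, ?_⟩
    rw [abelSum_succ, abel, (ih (x + 1) y).2, truncExp_succ, shift_eq]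

theorem abelSum_eq_truncExp (m : ℕ) (x y : R) : abelSum m x y = truncExp m (x + y + m) :=
  (abelPolySum_eq_pow_and_abelSum_eq_truncExp m x y).2

end Abel

theorem sum_range_mul_descFactorial_mul_pow (n : ℕ) :
    ∑ c ∈ range (n + 1), c * n.descFactorial c * n ^ (n - c) = n ^ (n + 1) := by
  set d : ℕ → ℕ := fun c => n.descFactorial c * n ^ (n - c) with hd
  -- `c d_c = n d_c - n d_(c+1)`
  have step (c : ℕ) : c * d c + n * d (c + 1) = n * d c := by
    rcases lt_trichotomy c n with h | rfl | h
    · obtain ⟨k, rfl⟩ := Nat.exists_eq_add_of_lt h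
      simp only [hd, Nat.descFactorial_succ, show c + k + 1 - c = k + 1 by omega,
        show c + k + 1 - (c + 1) = k by omega]
      ring
    · simp [hd, Nat.descFactorial_succ]
    · simp [hd, Nat.descFactorial_eq_zero_iff_lt.mpr h]
  have telescope (c : ℕ) : ∑ i ∈ range c, i * d i + n * d c = n * d 0 := by
    induction c with
    | zero => simp
    | succ c ih => rw [sum_range_succ, add_assoc, step, ih]
  have d_succ : d (n + 1) = 0 := by simp [hd]
  have d_zero : d 0 = n ^ n := by simp [hd]
  have := telescope (n + 1)
  rw [d_succ, d_zero, mul_zero, add_zero, ← pow_succ'] at this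
  simpa only [hd, mul_assoc] using this

theorem sum_antidiagonal_descFactorial_mul_truncExp (n : ℕ) :
    ∑ p ∈ antidiagonal n, n.descFactorial p.1 * truncExp p.2 n
      = n ^ (n + 1) + truncExp n n := by
  have merge : ∀ p ∈ antidiagonal n, n.descFactorial p.1 * truncExp p.2 n
      = ∑ q ∈ antidiagonal p.2, n.descFactorial (p.1 + q.1) * n ^ q.2 := by
    intro p hp
    rw [truncExp, mul_sum]
    refine sum_congr rfl fun q _ => ?_
    rw [← Nat.descFactorial_mul_descFactorial (Nat.le_add_right p.1 q.1), Nat.add_sub_cancel_left,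
      ← mem_antidiagonal.mp hp, Nat.add_sub_cancel_left, Nat.cast_id]
    ring
  rw [sum_congr rfl merge, sum_antidiagonal_antidiagonal_add n fun c b => n.descFactorial c * n ^ b,
    ← sum_range_mul_descFactorial_mul_pow,
    ← Nat.sum_antidiagonal_eq_sum_range_succ (fun c b => c * n.descFactorial c * n ^ b), truncExp,
    ← sum_add_distrib]
  refine sum_congr rfl fun p _ => ?_
  simp only [smul_eq_mul, Nat.cast_id]
  ring

theorem sum_antidiagonal_choose_mul_pow_self_mul_abelSum (n : ℕ) :
    ∑ p ∈ antidiagonal n, n.choose p.1 * p.1 ^ p.1 * abelSum p.2 0 0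
      = n ^ (n + 1) + abelSum n 0 0 := by
  calc ∑ p ∈ antidiagonal n, n.choose p.1 * p.1 ^ p.1 * abelSum p.2 0 0
      = ∑ p ∈ antidiagonal n, ∑ q ∈ antidiagonal p.2,
          (n.choose p.1 * p.2.choose q.1)
            • (p.1 ^ p.1 * (q.1.factorial * (q.1 + q.2) ^ q.2)) := by
        refine sum_congr rfl fun p _ => ?_
        rw [abelSum_eq_truncExp, truncExp, mul_sum]
        refine sum_congr rfl fun q hq => ?_
        rw [← mem_antidiagonal.mp hq, Nat.descFactorial_eq_factorial_mul_choose]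
        simp only [Nat.cast_id, zero_add, smul_eq_mul]
        ring
    _ = ∑ p ∈ antidiagonal n, ∑ q ∈ antidiagonal p.2,
          (n.choose p.1 * p.2.choose q.1) • (q.1 ^ q.1 * (p.1.factorial * (p.1 + q.2) ^ q.2)) :=
        sum_antidiagonal_antidiagonal_choose_comm n fun j i l => j ^ j * (i.factorial * (i + l) ^ l)
    _ = ∑ p ∈ antidiagonal n, n.descFactorial p.1 * truncExp p.2 n := by
        refine sum_congr rfl fun p hp => ?_
        have h := abelSum_eq_truncExp p.2 0 (p.1 : ℕ)
        rw [zero_add, Nat.cast_id, mem_antidiagonal.mp hp] at h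
        rw [← h, abelSum, mul_sum, Nat.descFactorial_eq_factorial_mul_choose]
        refine sum_congr rfl fun q _ => ?_
        simp only [Nat.cast_id, zero_add, smul_eq_mul]
        ring
    _ = n ^ (n + 1) + abelSum n 0 0 := by
        rw [sum_antidiagonal_descFactorial_mul_truncExp, abelSum_eq_truncExp, zero_add, zero_add,
          Nat.cast_id]

theorem abelSum_zero_zero_eq_sum_range (m : ℕ) :
    abelSum m 0 0 = ∑ k ∈ range (m + 1), m.choose k * k ^ k * (m - k) ^ (m - k) := by
  simp only [abelSum, Nat.cast_id, zero_add]
  exact Nat.sum_antidiagonal_eq_sum_range_succ (fun k l => m.choose k * k ^ k * l ^ l) m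

theorem lacasse_identity_general (n : ℕ) :
    n ^ (n + 1)
      = ∑ j ∈ Finset.Icc 1 n, ∑ k ∈ Finset.range (n - j + 1),
          n.choose j * (n - j).choose k * j ^ j * k ^ k * (n - j - k) ^ (n - j - k) := by
  have inner (j : ℕ) : ∑ k ∈ range (n - j + 1),
      n.choose j * (n - j).choose k * j ^ j * k ^ k * (n - j - k) ^ (n - j - k)
        = n.choose j * j ^ j * abelSum (n - j) 0 0 := by
    rw [abelSum_zero_zero_eq_sum_range, mul_sum]
    exact sum_congr rfl fun k _ => by ring
  have h := sum_antidiagonal_choose_mul_pow_self_mul_abelSum n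
  rw [sum_antidiagonal_eq_add_sum_Icc n fun j r => n.choose j * j ^ j * abelSum r 0 0] at h
  simp only [inner, Nat.choose_zero_right, pow_zero, one_mul] at h ⊢
  omega

theorem lacasse_identity (n : ℕ) (hn : 1 ≤ n) :
    n ^ (n + 1)
      = ∑ j ∈ Finset.Icc 1 n, ∑ k ∈ Finset.range (n - j + 1),
          n.choose j * (n - j).choose k * j ^ j * k ^ k * (n - j - k) ^ (n - j - k) :=
  lacasse_identity_general n
end
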